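/- arXiv:1908.11677 — 2 statements merged into one kernel-verified Lean document; each statement's English description precedes it below -/
import Mathlib

section
/- For an arclength-parametrized closed curve f with unit tangent τ = f', the identity ‖f(s₁) - f(s₂)‖² = (s₁ - s₂)² - ∫_{s₂}^{s₁}∫_{s₂}^{s₁} (1/2)‖τ(s₃) - τ(s₄)‖² ds₃ ds₄ holds, i.e., (s₁-s₂)² - ‖Δf‖² = (1/2)∫∫ ‖Δτ‖². -/
/-! Expanding `‖τ s - τ t‖² = ‖τ s‖² - 2⟪τ s, τ t⟫ + ‖τ t‖²` and integrating over the square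
turns the double integral into the variance-type expression `2 (b - a) ∫ ‖τ‖² - 2 ‖∫ τ‖²`.
For a unit-speed curve `∫ ‖τ‖² = s₁ - s₂`, and `∫ τ = f s₁ - f s₂` by the fundamental theorem
of calculus. -/

open Real intervalIntegral

namespace intervalIntegral

variable {E : Type*} [NormedAddCommGroup E] [InnerProductSpace ℝ E] [CompleteSpace E]

theorem integral_integral_norm_sub_sq {g : ℝ → E} (hg : Continuous g) (a b : ℝ) :
    ∫ s in a..b, ∫ t in a..b, ‖g s - g t‖ ^ 2 =
      2 * (b - a) * (∫ s in a..b, ‖g s‖ ^ 2) - 2 * ‖∫ s in a..b, g s‖ ^ 2 := by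
  set G := ∫ t in a..b, g t
  set I := ∫ t in a..b, ‖g t‖ ^ 2
  have integral_inner (c : E) : ∫ t in a..b, inner ℝ c (g t) = inner ℝ c G :=
    (innerSL ℝ c).intervalIntegral_comp_comm (hg.intervalIntegrable a b)
  have integral_norm_sub_sq_left (s : ℝ) :
      ∫ t in a..b, ‖g s - g t‖ ^ 2 = (b - a) * ‖g s‖ ^ 2 - 2 * inner ℝ G (g s) + I := by
    simp only [norm_sub_sq_real]
    rw [integral_add, integral_sub, integral_const, integral_const_mul, smul_eq_mul,
      integral_inner, real_inner_comm]
    all_goals exact Continuous.intervalIntegrable (by fun_prop) _ _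
  rw [integral_congr fun s _ => integral_norm_sub_sq_left s, integral_add, integral_sub,
    integral_const_mul, integral_const_mul, integral_inner, integral_const, smul_eq_mul,
    real_inner_self_eq_norm_sq]
  · ring
  all_goals exact Continuous.intervalIntegrable (by fun_prop) _ _

end intervalIntegral

theorem chord_length_identity {n : ℕ} (f : ℝ → EuclideanSpace ℝ (Fin n))
    (hf : ContDiff ℝ 1 f) (hunit : ∀ s, ‖deriv f s‖ = 1) (s₁ s₂ : ℝ) :
    (s₁ - s₂) ^ 2 - ‖f s₁ - f s₂‖ ^ 2 =
      (1 / 2) * ∫ s₃ in s₂..s₁, ∫ s₄ in s₂..s₁, ‖deriv f s₃ - deriv f s₄‖ ^ 2 := by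
  have hτ : Continuous (deriv f) := hf.continuous_deriv le_rfl
  have chord : ∫ t in s₂..s₁, deriv f t = f s₁ - f s₂ :=
    integral_deriv_eq_sub (fun x _ => hf.differentiable one_ne_zero x) (hτ.intervalIntegrable _ _)
  rw [integral_integral_norm_sub_sq hτ, chord]
  simp only [hunit, one_pow, integral_const, smul_eq_mul]
  ring
end

section
/- If u, v : ℝ → ℝ^d are continuously differentiable, then lim_{(s₁,s₂)→(s,s), s₁≠s₂} (1/(s₁-s₂)⁴) ∫_{s₂}^{s₁}∫_{s₂}^{s₁}∫_{s₄}^{s₃}∫_{s₄}^{s₃} u'(s₅)·v'(s₆) ds₅ ds₆ ds₃ ds₄ = (1/6) u'(s)·v'(s). -/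
/-!
The inner double integral is `⟪u s₃ - u s₄, v s₃ - v s₄⟫` by the fundamental theorem of calculus.
Near `(s, s)` the increments `u x - u y` and `v x - v y` are `(x - y) • u' s` and `(x - y) • v' s`
up to `o(|x - y|)`, so the integrand is `⟪u' s, v' s⟫ (x - y) ^ 2 + o((x - y) ^ 2)`, and
`∫∫ (x - y) ^ 2 = (s₁ - s₂) ^ 4 / 6` over the square.
-/

open Real Filter intervalIntegral Set
open scoped RealInnerProductSpace Topology

theorem ContinuousAt.eventually_forall_uIcc_dist_le {X : Type*} [PseudoMetricSpace X]
    {φ : ℝ → X} {s η : ℝ} (hφ : ContinuousAt φ s) (hη : 0 < η) :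
    ∀ᶠ p : ℝ × ℝ in 𝓝 (s, s), ∀ t ∈ uIcc p.2 p.1, dist (φ t) (φ s) ≤ η := by
  have hU : φ ⁻¹' Metric.closedBall (φ s) η ∈ 𝓝 s :=
    hφ.preimage_mem_nhds (Metric.closedBall_mem_nhds _ hη)
  have hIcc := (continuous_snd.tendsto (s, s)).uIcc (continuous_fst.tendsto (s, s))
  filter_upwards [tendsto_smallSets_iff.mp hIcc _ hU] with p hp t ht
  exact hp ht

theorem exists_mul_add_lt_and_pos (C : ℝ) {ε : ℝ} (hε : 0 < ε) :
    ∃ η : ℝ, η * (C + η) < ε ∧ 0 < η := by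
  have hlim : Tendsto (fun η : ℝ => η * (C + η)) (𝓝[>] 0) (𝓝 0) :=
    ((by fun_prop : Continuous fun η : ℝ => η * (C + η)).tendsto' 0 0 (by simp)).mono_left
      nhdsWithin_le_nhds
  exact ((hlim.eventually (gt_mem_nhds hε)).and self_mem_nhdsWithin).exists

theorem integral_integral_sub_sq (a b : ℝ) :
    ∫ x in a..b, ∫ y in a..b, (x - y) ^ 2 = (b - a) ^ 4 / 6 := by
  have h (x : ℝ) : ∫ y in a..b, (x - y) ^ 2 = ((x - a) ^ 3 - (x - b) ^ 3) / 3 := by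
    rw [integral_comp_sub_left (· ^ 2), integral_pow]; ring
  simp only [h, intervalIntegral.integral_div]
  rw [integral_sub ((by fun_prop : Continuous fun x : ℝ => (x - a) ^ 3).intervalIntegrable a b)
    ((by fun_prop : Continuous fun x : ℝ => (x - b) ^ 3).intervalIntegrable a b),
    integral_comp_sub_right (· ^ 3), integral_comp_sub_right (· ^ 3), integral_pow, integral_pow]
  ring

theorem abs_integral_integral_sub_le {g : ℝ → ℝ → ℝ} (hg : Continuous (Function.uncurry g))
    {A K a b : ℝ} (hK : 0 ≤ K)
    (h : ∀ x ∈ uIcc a b, ∀ y ∈ uIcc a b, |g x y - A * (x - y) ^ 2| ≤ K * (x - y) ^ 2) :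
    |(∫ x in a..b, ∫ y in a..b, g x y) - A * ((b - a) ^ 4 / 6)| ≤ K * (b - a) ^ 4 := by
  have hq : Continuous (Function.uncurry fun x y : ℝ => A * (x - y) ^ 2) := by fun_prop
  have hdiff : (∫ x in a..b, ∫ y in a..b, g x y) - A * ((b - a) ^ 4 / 6) =
      ∫ x in a..b, ∫ y in a..b, (g x y - A * (x - y) ^ 2) := by
    simp only [← integral_integral_sub_sq, ← intervalIntegral.integral_const_mul]
    rw [← integral_sub
      ((continuous_parametric_intervalIntegral_of_continuous' hg a b).intervalIntegrable a b)
      ((continuous_parametric_intervalIntegral_of_continuous' hq a b).intervalIntegrable a b)]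
    refine integral_congr fun x _ => (integral_sub ?_ ?_).symm <;>
      exact (Continuous.intervalIntegrable (by fun_prop) a b)
  have hsq {x y : ℝ} (hx : x ∈ uIcc a b) (hy : y ∈ uIcc a b) : (x - y) ^ 2 ≤ (b - a) ^ 2 := by
    have hdist := Real.dist_le_of_mem_uIcc hx hy
    rw [dist_comm a b] at hdist
    simpa [Real.dist_eq, sq_abs] using pow_le_pow_left₀ dist_nonneg hdist 2
  rw [hdiff, ← Real.norm_eq_abs]
  calc ‖∫ x in a..b, ∫ y in a..b, (g x y - A * (x - y) ^ 2)‖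
      ≤ K * (b - a) ^ 2 * |b - a| * |b - a| := by
        refine norm_integral_le_of_norm_le_const fun x hx => ?_
        refine norm_integral_le_of_norm_le_const fun y hy => ?_
        have hx' := uIoc_subset_uIcc hx
        have hy' := uIoc_subset_uIcc hy
        exact (h x hx' y hy').trans (mul_le_mul_of_nonneg_left (hsq hx' hy') hK)
    _ = K * (b - a) ^ 4 := by rw [mul_assoc, ← sq, sq_abs]; ring

variable {E : Type*} [NormedAddCommGroup E] [InnerProductSpace ℝ E]

theorem abs_inner_sub_inner_mul_sq_le {a b p q : E} {r η : ℝ}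
    (ha : ‖a - r • p‖ ≤ η * |r|) (hb : ‖b - r • q‖ ≤ η * |r|) :
    |⟪a, b⟫ - ⟪p, q⟫ * r ^ 2| ≤ η * (‖p‖ + ‖q‖ + η) * r ^ 2 := by
  have hdecomp : ⟪a, b⟫ - ⟪p, q⟫ * r ^ 2
      = ⟪a - r • p, b - r • q⟫ + r * ⟪a - r • p, q⟫ + r * ⟪p, b - r • q⟫ := by
    simp only [inner_sub_left, inner_sub_right, real_inner_smul_left, real_inner_smul_right]
    ring
  have hηr : 0 ≤ η * |r| := (norm_nonneg _).trans ha
  calc |⟪a, b⟫ - ⟪p, q⟫ * r ^ 2|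
      ≤ ‖a - r • p‖ * ‖b - r • q‖ + |r| * (‖a - r • p‖ * ‖q‖)
          + |r| * (‖p‖ * ‖b - r • q‖) := by
        rw [hdecomp]
        refine (abs_add_three _ _ _).trans (add_le_add_three (abs_real_inner_le_norm _ _) ?_ ?_) <;>
          rw [abs_mul] <;> gcongr <;> exact abs_real_inner_le_norm _ _
    _ ≤ η * |r| * (η * |r|) + |r| * (η * |r| * ‖q‖) + |r| * (‖p‖ * (η * |r|)) := by gcongr
    _ = η * (‖p‖ + ‖q‖ + η) * r ^ 2 := by rw [← sq_abs r]; ring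

variable [CompleteSpace E]

theorem integral_deriv_eq_sub_of_contDiff {f : ℝ → E} (hf : ContDiff ℝ 1 f) (a b : ℝ) :
    ∫ t in a..b, deriv f t = f b - f a :=
  integral_deriv_eq_sub (fun _ _ => (hf.differentiable one_ne_zero).differentiableAt)
    ((hf.continuous_deriv le_rfl).intervalIntegrable a b)

theorem integral_integral_inner_deriv {u v : ℝ → E} (hu : ContDiff ℝ 1 u) (hv : ContDiff ℝ 1 v)
    (a b : ℝ) :
    ∫ x in a..b, ∫ y in a..b, ⟪deriv u x, deriv v y⟫ = ⟪u b - u a, v b - v a⟫ := by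
  have hinner (x : ℝ) : ∫ y in a..b, ⟪deriv u x, deriv v y⟫ = ⟪deriv u x, v b - v a⟫ := by
    rw [← integral_deriv_eq_sub_of_contDiff hv]
    exact (innerSL ℝ (deriv u x)).intervalIntegral_comp_comm
      ((hv.continuous_deriv le_rfl).intervalIntegrable a b)
  simp only [hinner]
  rw [← integral_deriv_eq_sub_of_contDiff hu]
  exact ((innerSL ℝ (E := E)).flip (v b - v a)).intervalIntegral_comp_comm
    ((hu.continuous_deriv le_rfl).intervalIntegrable a b)

theorem norm_sub_sub_smul_deriv_le {f : ℝ → E} (hf : ContDiff ℝ 1 f) {c η x y : ℝ}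
    (h : ∀ t ∈ uIcc y x, ‖deriv f t - deriv f c‖ ≤ η) :
    ‖f x - f y - (x - y) • deriv f c‖ ≤ η * |x - y| := by
  have heq : f x - f y - (x - y) • deriv f c = ∫ t in y..x, (deriv f t - deriv f c) := by
    rw [integral_sub ((hf.continuous_deriv le_rfl).intervalIntegrable _ _)
      intervalIntegrable_const, integral_deriv_eq_sub_of_contDiff hf, integral_const]
  rw [heq]
  exact norm_integral_le_of_norm_le_const fun t ht => h t (uIoc_subset_uIcc ht)

theorem quadruple_integral_limit {d : ℕ} (u v : ℝ → EuclideanSpace ℝ (Fin d))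
    (hu : ContDiff ℝ 1 u) (hv : ContDiff ℝ 1 v) (s : ℝ) :
    Tendsto
      (fun p : ℝ × ℝ => (1 / (p.1 - p.2) ^ 4) *
        ∫ s₃ in p.2..p.1, ∫ s₄ in p.2..p.1, ∫ s₅ in s₄..s₃, ∫ s₆ in s₄..s₃,
          ⟪deriv u s₅, deriv v s₆⟫)
      (𝓝[{p : ℝ × ℝ | p.1 ≠ p.2}] (s, s))
      (𝓝 ((1 / 6) * ⟪deriv u s, deriv v s⟫)) := by
  simp only [integral_integral_inner_deriv hu hv]
  rw [Metric.tendsto_nhds]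
  intro ε hε
  obtain ⟨η, hηε, hη⟩ := exists_mul_add_lt_and_pos (‖deriv u s‖ + ‖deriv v s‖) hε
  have hu' := ((hu.continuous_deriv le_rfl).continuousAt (x := s)).eventually_forall_uIcc_dist_le hη
  have hv' := ((hv.continuous_deriv le_rfl).continuousAt (x := s)).eventually_forall_uIcc_dist_le hη
  filter_upwards [nhdsWithin_le_nhds (hu'.and hv'), self_mem_nhdsWithin]
    with ⟨s₁, s₂⟩ ⟨hus, hvs⟩ hne
  simp only [dist_eq_norm] at hus hvs
  have hbound := abs_integral_integral_sub_le (g := fun x y => ⟪u x - u y, v x - v y⟫)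
    (by fun_prop) (by positivity) fun x hx y hy =>
      abs_inner_sub_inner_mul_sq_le
        (norm_sub_sub_smul_deriv_le hu fun t ht => hus t (uIcc_subset_uIcc hy hx ht))
        (norm_sub_sub_smul_deriv_le hv fun t ht => hvs t (uIcc_subset_uIcc hy hx ht))
  have hD : 0 < (s₁ - s₂) ^ 4 := even_two_mul 2 |>.pow_pos (sub_ne_zero.mpr hne)
  have hsplit : 1 / (s₁ - s₂) ^ 4 * (∫ x in s₂..s₁, ∫ y in s₂..s₁, ⟪u x - u y, v x - v y⟫)
      - 1 / 6 * ⟪deriv u s, deriv v s⟫ = ((∫ x in s₂..s₁, ∫ y in s₂..s₁, ⟪u x - u y, v x - v y⟫)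
        - ⟪deriv u s, deriv v s⟫ * ((s₁ - s₂) ^ 4 / 6)) / (s₁ - s₂) ^ 4 := by
    field_simp
  rw [Real.dist_eq, hsplit, abs_div, abs_of_pos hD, div_lt_iff₀ hD]
  exact hbound.trans_lt (mul_lt_mul_of_pos_right hηε hD)
end
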